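/- Let (T, F) be a tree with dynamics with H ≥ 1 and let x be an extended end that is recurrent under F. Then for any L ∈ ℤ, x has a unique minimal return chain (x_{l(k)})_{k ∈ ℤ} with l(0) = L. -/

import Mathlib

/-!
Since `F` lowers levels by `H` and commutes with `parent`, a return `F^[n] (x l)` can only land
on `x (l - n * H)`, and a return of `x l` is also a return of every ancestor `x b`, `b ≤ l`.
Recurrence therefore gives every `x l` a first return time `n l`, and return chains are exactly
the backward orbits of the first return map `τ l = l - n l * H`. Every fibre of `τ` has a least
element (the least level whose orbit meets `x m` at all), so a minimal chain through `L` is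
forced: backwards it is the `τ`-orbit of `L`, forwards `l k` is the least point of
`τ ⁻¹' {l (k - 1)}`.
-/

/-- An extended end of a genealogical tree with levels. -/
def IsEnd {V : Type*} (parent : V → V) (level : V → ℤ) (x : ℤ → V) : Prop :=
  ∀ l : ℤ, level (x l) = l ∧ x (l - 1) = parent (x l)

/-- `F^[n] (x l)` returns to the extended end `x`. -/
def Returns {V : Type*} (F : V → V) (x : ℤ → V) (l : ℤ) (n : ℕ) : Prop :=
  1 ≤ n ∧ ∃ m : ℤ, F^[n] (x l) = x m

/-- `n` is the first return time of `x l` to the extended end `x`. -/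
def IsFirstReturnTime {V : Type*} (F : V → V) (x : ℤ → V) (l : ℤ) (n : ℕ) : Prop :=
  Returns F x l n ∧ ∀ n' : ℕ, Returns F x l n' → n ≤ n'

/-- A return chain `(x (l k))` of the extended end `x`, with return times `(n k)`:
`n k` is the first return time of `x (l k)` and `F^[n k] (x (l k)) = x (l (k-1))`. -/
def IsReturnChain {V : Type*} (F : V → V) (x : ℤ → V) (l : ℤ → ℤ) (n : ℤ → ℕ) : Prop :=
  ∀ k : ℤ, IsFirstReturnTime F x (l k) (n k) ∧ F^[n k] (x (l k)) = x (l (k - 1))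

/-- A return chain is minimal if for every `k > 0`, `l k` is the least index whose
first return is `x (l (k-1))`. -/
def IsMinimalChain {V : Type*} (F : V → V) (x : ℤ → V) (l : ℤ → ℤ) : Prop :=
  ∀ k : ℤ, 0 < k → ∀ l' : ℤ,
    (∃ n' : ℕ, IsFirstReturnTime F x l' n' ∧ F^[n'] (x l') = x (l (k - 1))) → l k ≤ l'

section BackwardOrbit

variable {α : Type*} [LinearOrder α]

def IsMinimalBackwardOrbit (τ : α → α) (l : ℤ → α) : Prop :=
  (∀ k, τ (l k) = l (k - 1)) ∧ ∀ k, 0 < k → ∀ b, τ b = l (k - 1) → l k ≤ b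

theorem IsMinimalBackwardOrbit.eq {τ : α → α} {l l' : ℤ → α} (hl : IsMinimalBackwardOrbit τ l)
    (hl' : IsMinimalBackwardOrbit τ l') (h0 : l 0 = l' 0) : l = l' := by
  funext k
  induction k using Int.induction_on with
  | zero => exact h0
  | succ k ih =>
    have hk : (0 : ℤ) < k + 1 := by omega
    refine le_antisymm (hl.2 _ hk _ ?_) (hl'.2 _ hk _ ?_) <;> simp [hl.1, hl'.1, ih]
  | pred k ih => rw [← hl.1, ← hl'.1, ih]

theorem exists_isMinimalBackwardOrbit (τ : α → α) (hτ : ∀ a, ∃ b, IsLeast (τ ⁻¹' {a}) b) (a₀ : α) :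
    ∃ l : ℤ → α, IsMinimalBackwardOrbit τ l ∧ l 0 = a₀ := by
  choose g hg using hτ
  let l : ℤ → α := fun k =>
    k.inductionOn' 0 (motive := fun _ => α) a₀ (fun _ _ a => g a) (fun _ _ a => τ a)
  have hl_pred : ∀ k ≤ 0, l (k - 1) = τ (l k) := fun k hk => Int.inductionOn'_sub_one hk
  have hl_pos : ∀ k, 0 < k → l k = g (l (k - 1)) := fun k hk => by
    simpa using Int.inductionOn'_add_one (motive := fun _ => α) (zero := a₀)
      (succ := fun _ _ a => g a) (pred := fun _ _ a => τ a) (show 0 ≤ k - 1 by omega)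
  refine ⟨l, ⟨fun k => ?_, fun k hk b hb => hl_pos k hk ▸ (hg _).2 hb⟩, Int.inductionOn'_self⟩
  rcases le_or_gt k 0 with hk | hk
  · exact (hl_pred k hk).symm
  · rw [hl_pos k hk]
    exact (hg _).1

end BackwardOrbit

section Dynamics

variable {V : Type*} {parent : V → V} {level : V → ℤ} {F : V → V} {H : ℤ} {x : ℤ → V}

theorem level_iterate (hFlev : ∀ v, level (F v) = level v - H) (n : ℕ) (v : V) :
    level (F^[n] v) = level v - n * H := by
  induction n with
  | zero => simp
  | succ n ih => rw [Function.iterate_succ_apply', hFlev, ih]; push_cast; ring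

namespace IsEnd

variable (hx : IsEnd parent level x)
include hx

theorem eq_sub_of_iterate_eq (hFlev : ∀ v, level (F v) = level v - H) {n : ℕ} {a b : ℤ}
    (h : F^[n] (x a) = x b) : b = a - n * H := by
  simpa only [h, (hx _).1] using level_iterate hFlev n (x a)

theorem iterate_eq_of_le (hF : Function.Commute F parent) {n : ℕ} {a b : ℤ}
    (h : F^[n] (x a) = x (a - n * H)) (hba : b ≤ a) : F^[n] (x b) = x (b - n * H) := by
  induction b, hba using Int.leInductionDown with
  | base => exact h
  | pred b _ ih =>
    rw [(hx b).2, hF.iterate_left n, ih, ← (hx _).2, sub_right_comm]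

theorem returns_iff (hFlev : ∀ v, level (F v) = level v - H) {l : ℤ} {n : ℕ} :
    Returns F x l n ↔ 1 ≤ n ∧ F^[n] (x l) = x (l - n * H) :=
  and_congr_right fun _ =>
    ⟨fun ⟨_, hm⟩ => hx.eq_sub_of_iterate_eq hFlev hm ▸ hm, fun h => ⟨_, h⟩⟩

theorem exists_returns (hFlev : ∀ v, level (F v) = level v - H) (hF : Function.Commute F parent)
    (hH : 0 ≤ H) (hrec : ∀ L : ℤ, ∃ K : ℤ, ∃ N : ℕ, 1 ≤ N ∧ F^[N] (x K) = x L) (l : ℤ) :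
    ∃ n, Returns F x l n := by
  obtain ⟨K, N, hN, hKN⟩ := hrec l
  have hl := hx.eq_sub_of_iterate_eq hFlev hKN
  refine ⟨N, (hx.returns_iff hFlev).2 ⟨hN, hx.iterate_eq_of_le hF (hl ▸ hKN) ?_⟩⟩
  nlinarith

end IsEnd

theorem IsFirstReturnTime.eq {l : ℤ} {n n' : ℕ} (h : IsFirstReturnTime F x l n)
    (h' : IsFirstReturnTime F x l n') : n = n' :=
  le_antisymm (h.2 _ h'.1) (h'.2 _ h.1)

theorem exists_isFirstReturnTime {l : ℤ} (h : ∃ n, Returns F x l n) :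
    ∃ n, IsFirstReturnTime F x l n := by
  classical
  exact ⟨Nat.find h, Nat.find_spec h, fun _ => Nat.find_min' h⟩

namespace IsEnd

variable (hx : IsEnd parent level x) (hFlev : ∀ v, level (F v) = level v - H)
  {nf : ℤ → ℕ} (hnf : ∀ l, IsFirstReturnTime F x l (nf l))
include hx hFlev hnf

theorem iterate_firstReturnTime (l : ℤ) : F^[nf l] (x l) = x (l - nf l * H) :=
  ((hx.returns_iff hFlev).1 (hnf l).1).2

theorem isReturnChain_iff {l : ℤ → ℤ} {n : ℤ → ℕ} :
    IsReturnChain F x l n ↔ n = nf ∘ l ∧ ∀ k, l k - nf (l k) * H = l (k - 1) := by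
  refine ⟨fun h => ?_, ?_⟩
  · have hn : n = nf ∘ l := funext fun k => (h k).1.eq (hnf (l k))
    subst hn
    exact ⟨rfl, fun k => (hx.eq_sub_of_iterate_eq hFlev (h k).2).symm⟩
  · rintro ⟨rfl, hl⟩ k
    exact ⟨hnf (l k), hl k ▸ hx.iterate_firstReturnTime hFlev hnf (l k)⟩

theorem isMinimalChain_iff {l : ℤ → ℤ} :
    IsMinimalChain F x l ↔ ∀ k, 0 < k → ∀ l', l' - nf l' * H = l (k - 1) → l k ≤ l' := by
  refine forall₂_congr fun k _ => forall_congr' fun l' => imp_congr_left ⟨?_, ?_⟩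
  · rintro ⟨n', hn', h⟩
    rw [hn'.eq (hnf l')] at h
    exact (hx.eq_sub_of_iterate_eq hFlev h).symm
  · intro h
    exact ⟨nf l', hnf l', h ▸ hx.iterate_firstReturnTime hFlev hnf l'⟩

/- The least level from which some iterate of `F` hits `x m` has first return exactly `x m`:
an earlier return would land on a lower level that still reaches `x m`. -/
theorem exists_isLeast_preimage_firstReturn (hH : 0 < H)
    (hrec : ∀ L : ℤ, ∃ K : ℤ, ∃ N : ℕ, 1 ≤ N ∧ F^[N] (x K) = x L) (m : ℤ) :
    ∃ l, IsLeast ((fun l => l - nf l * H) ⁻¹' {m}) l := by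
  have hbdd : ∃ b, ∀ l, (∃ N : ℕ, 1 ≤ N ∧ F^[N] (x l) = x m) → b ≤ l := by
    refine ⟨m, fun l ⟨N, hN, h⟩ => ?_⟩
    have : (1 : ℤ) ≤ N := by exact_mod_cast hN
    nlinarith [hx.eq_sub_of_iterate_eq hFlev h]
  obtain ⟨l₀, ⟨N, hN, hl₀⟩, hmin⟩ := Int.exists_least_of_bdd hbdd (hrec m)
  refine ⟨l₀, ?_, fun l (h : l - nf l * H = m) =>
    hmin l ⟨nf l, (hnf l).1.1, h ▸ hx.iterate_firstReturnTime hFlev hnf l⟩⟩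
  have hle : nf l₀ ≤ N := (hnf l₀).2 N ⟨hN, m, hl₀⟩
  rcases hle.lt_or_eq with hlt | rfl
  · have hreach : F^[N - nf l₀] (x (l₀ - nf l₀ * H)) = x m := by
      rw [← hx.iterate_firstReturnTime hFlev hnf, ← Function.iterate_add_apply,
        Nat.sub_add_cancel hle, hl₀]
    have hlow := hmin _ ⟨N - nf l₀, by omega, hreach⟩
    have hn₀ : (1 : ℤ) ≤ nf l₀ := by exact_mod_cast (hnf l₀).1.1
    nlinarith
  · exact (hx.eq_sub_of_iterate_eq hFlev hl₀).symm

end IsEnd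

end Dynamics

theorem stmt_15_general (V : Type*) (parent : V → V) (level : V → ℤ)
    (F : V → V) (hF : ∀ v, F (parent v) = parent (F v))
    (H : ℤ) (hH : 1 ≤ H) (hFlev : ∀ v, level (F v) = level v - H)
    (x : ℤ → V) (hx : IsEnd parent level x)
    (hrec : ∀ L : ℤ, ∃ K : ℤ, ∃ N : ℕ, 1 ≤ N ∧ F^[N] (x K) = x L) :
    ∀ L : ℤ, ∃! p : (ℤ → ℤ) × (ℤ → ℕ),
      IsReturnChain F x p.1 p.2 ∧ IsMinimalChain F x p.1 ∧ p.1 0 = L := by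
  intro L
  choose nf hnf using fun l =>
    exists_isFirstReturnTime (hx.exists_returns hFlev hF (by omega) hrec l)
  have hchain := fun {l n} => hx.isReturnChain_iff hFlev hnf (l := l) (n := n)
  have hmin := fun {l} => hx.isMinimalChain_iff hFlev hnf (l := l)
  obtain ⟨l, ⟨hlτ, hlmin⟩, hl0⟩ := exists_isMinimalBackwardOrbit _
    (hx.exists_isLeast_preimage_firstReturn hFlev hnf (by omega) hrec) L
  refine ⟨(l, nf ∘ l), ⟨hchain.2 ⟨rfl, hlτ⟩, hmin.2 hlmin, hl0⟩, ?_⟩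
  rintro ⟨l', n'⟩ ⟨hc', hm', hl'0⟩
  dsimp only at hc' hm' hl'0
  obtain ⟨rfl, hl'τ⟩ := hchain.1 hc'
  obtain rfl : l' = l :=
    IsMinimalBackwardOrbit.eq ⟨hl'τ, hmin.1 hm'⟩ ⟨hlτ, hlmin⟩ (hl'0.trans hl0.symm)
  rfl

/-- If the extended end `x` is recurrent, then for any `L` there is a
unique minimal return chain of `x` with `l 0 = L`. -/
theorem stmt_15 (V : Type*) (parent : V → V) (level : V → ℤ)
    (hpl : ∀ v, level (parent v) = level v - 1)
    (F : V → V) (hF : ∀ v, F (parent v) = parent (F v))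
    (H : ℤ) (hH : 1 ≤ H) (hFlev : ∀ v, level (F v) = level v - H)
    (x : ℤ → V) (hx : IsEnd parent level x)
    (hrec : ∀ L : ℤ, ∃ K : ℤ, ∃ N : ℕ, 1 ≤ N ∧ F^[N] (x K) = x L) :
    ∀ L : ℤ, ∃! p : (ℤ → ℤ) × (ℤ → ℕ),
      IsReturnChain F x p.1 p.2 ∧ IsMinimalChain F x p.1 ∧ p.1 0 = L :=
  stmt_15_general V parent level F hF H hH hFlev x hx hrec
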